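/- arXiv:2311.04065 — 5 statements merged into one kernel-verified Lean document; each statement's English description precedes it below -/
import Mathlib

section
/- For every real Λ > 1, there exists a unique c in the open interval (0,1) such that c = tanh(Λ·c). -/
/-!
The map `f x = tanh (Λ * x)` vanishes at `0`, has slope `Λ > 1` there and stays below `1`, so
`f x - x` changes sign on `(0, 1]`. Since `tanh` is strictly concave on `[0, ∞)` with `tanh 0 = 0`,
the ratio `f x / x` is strictly decreasing for `x > 0`, and the positive fixed points of `f` are
exactly the solutions of `f x / x = 1`.
-/

open Function Real Set Filter Topology

section FixedPoint

variable {𝕜 : Type*} [Field 𝕜] [LinearOrder 𝕜] {f : 𝕜 → 𝕜}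

theorem StrictAntiOn.eq_of_isFixedPt_of_div_self (hf : StrictAntiOn (fun x => f x / x) (Ioi 0))
    {a b : 𝕜} (ha : 0 < a) (hb : 0 < b) (hfa : IsFixedPt f a) (hfb : IsFixedPt f b) : a = b :=
  hf.injOn ha hb (by simp only [hfa.eq, hfb.eq, div_self ha.ne', div_self hb.ne'])

theorem StrictConcaveOn.strictAntiOn_div_self [IsStrictOrderedRing 𝕜]
    (hf : StrictConcaveOn 𝕜 (Ici 0) f) (h0 : f 0 = 0) :
    StrictAntiOn (fun x => f x / x) (Ioi 0) := fun a ha b hb hab => by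
  simpa [h0] using hf.secant_strict_mono (mem_Ici.2 le_rfl) (Ioi_subset_Ici_self ha)
    (Ioi_subset_Ici_self hb) ha.ne' hb.ne' hab

end FixedPoint

theorem HasDerivAt.eventually_mul_lt_of_lt {f : ℝ → ℝ} {f' r : ℝ} (hf : HasDerivAt f f' 0)
    (h0 : f 0 = 0) (hr : r < f') : ∀ᶠ x in 𝓝[>] 0, r * x < f x := by
  filter_upwards [hf.tendsto_slope_zero_right (Ioi_mem_nhds hr), self_mem_nhdsWithin]
    with x hslope hx
  simp only [zero_add, h0, sub_zero, smul_eq_mul, mem_preimage, mem_Ioi] at hslope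
  rwa [lt_inv_mul_iff₀ hx, mul_comm] at hslope

theorem exists_mem_Ioo_isFixedPt_of_one_lt_deriv {f : ℝ → ℝ} {f' b : ℝ} (hb : 0 < b)
    (hf : ContinuousOn f (Icc 0 b)) (h0 : f 0 = 0) (hd : HasDerivAt f f' 0) (hf' : 1 < f')
    (hfb : f b < b) : ∃ c ∈ Ioo 0 b, IsFixedPt f c := by
  obtain ⟨x, hxfx, hx⟩ := ((hd.eventually_mul_lt_of_lt h0 hf').and
    (Ioo_mem_nhdsGT hb : ∀ᶠ x in 𝓝[>] (0 : ℝ), x ∈ Ioo 0 b)).exists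
  rw [one_mul] at hxfx
  have hsub : ContinuousOn (fun y => f y - y) (Icc x b) :=
    (hf.mono (Icc_subset_Icc_left hx.1.le)).sub continuousOn_id
  obtain ⟨c, hc, hfc⟩ := intermediate_value_Ioo' hx.2.le hsub ⟨sub_neg.2 hfb, sub_pos.2 hxfx⟩
  exact ⟨c, ⟨hx.1.trans hc.1, hc.2⟩, sub_eq_zero.1 hfc⟩

namespace Real

theorem hasDerivAt_tanh (x : ℝ) : HasDerivAt tanh (1 / cosh x ^ 2) x := by
  have h := (hasDerivAt_sinh x).div (hasDerivAt_cosh x) (cosh_pos x).ne'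
  rwa [← sq, ← sq, cosh_sq_sub_sinh_sq, show sinh / cosh = tanh from
    funext fun y => (tanh_eq_sinh_div_cosh y).symm] at h

theorem continuous_tanh : Continuous tanh :=
  continuous_iff_continuousAt.2 fun x => (hasDerivAt_tanh x).continuousAt

theorem strictConcaveOn_tanh : StrictConcaveOn ℝ (Ici 0) tanh := by
  refine StrictAntiOn.strictConcaveOn_of_deriv (convex_Ici 0) continuous_tanh.continuousOn
    fun a ha b hb hab => ?_
  rw [interior_Ici] at ha hb
  rw [(hasDerivAt_tanh a).deriv, (hasDerivAt_tanh b).deriv]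
  have hcosh : cosh a < cosh b := cosh_lt_cosh.2 (by rwa [abs_of_pos ha, abs_of_pos hb])
  gcongr

theorem strictAntiOn_tanh_mul_div_self {Λ : ℝ} (hΛ : 0 < Λ) :
    StrictAntiOn (fun x => tanh (Λ * x) / x) (Ioi 0) := fun a ha b hb hab => by
  have h := strictConcaveOn_tanh.strictAntiOn_div_self tanh_zero (mul_pos hΛ ha)
    (mul_pos hΛ hb) (mul_lt_mul_of_pos_left hab hΛ)
  simp only [div_mul_eq_div_div_swap] at h
  exact (div_lt_div_iff_of_pos_right hΛ).1 h

end Real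

theorem tanh_fixed_point_exists_unique (Λ : ℝ) (hΛ : 1 < Λ) :
    ∃! c : ℝ, c ∈ Set.Ioo (0:ℝ) 1 ∧ c = Real.tanh (Λ * c) := by
  have hderiv : HasDerivAt (fun x => tanh (Λ * x)) Λ 0 := by
    simpa [Function.comp_def] using
      (hasDerivAt_tanh (Λ * 0)).comp 0 ((hasDerivAt_id 0).const_mul Λ)
  obtain ⟨c, hc, hfix⟩ := exists_mem_Ioo_isFixedPt_of_one_lt_deriv one_pos
    (continuous_tanh.comp (continuous_const_mul Λ)).continuousOn (by simp) hderiv hΛ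
    (by simpa using tanh_lt_one Λ)
  refine ⟨c, ⟨hc, hfix.symm⟩, fun d ⟨hd, hfixd⟩ => ?_⟩
  exact (strictAntiOn_tanh_mul_div_self (one_pos.trans hΛ)).eq_of_isFixedPt_of_div_self
    hd.1 hc.1 hfixd.symm hfix
end

section
/- Let Λ > 1 and let c₀(Λ) ∈ (0,1) be the unique positive solution of c = tanh(Λc). Then for every ζ > 1 the equation ζ = c·(1 − c·tanh(Λc))/(c − tanh(Λc)) has a unique solution c in the interval (c₀(Λ), 1). -/
/-!
Clearing denominators, the equation says `tanh (Λ c) / c = (ζ - 1) / (ζ - c²)`. The left side is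
the slope of the chord from `0` of the concave function `c ↦ tanh (Λ c)`, hence antitone on
`(0, ∞)`, while the right side is strictly increasing on `(0, 1]`. Their difference is therefore
strictly decreasing; it is positive at the fixed point `c₀` (where the left side is `1`) and
negative at `1` (where the right side is `1`), so it has exactly one zero in `(c₀, 1)`.
-/

open Real Set

theorem Real.hasDerivAt_tanh_s2 (x : ℝ) : HasDerivAt tanh (cosh x ^ 2)⁻¹ x := by
  have h := (hasDerivAt_sinh x).div (hasDerivAt_cosh x) (cosh_pos x).ne'
  rw [show sinh / cosh = tanh from funext fun y => (tanh_eq_sinh_div_cosh y).symm] at h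
  refine h.congr_deriv ?_
  rw [← one_div, ← cosh_sq_sub_sinh_sq x]
  ring

theorem Real.continuous_tanh_s2 : Continuous tanh :=
  continuous_iff_continuousAt.2 fun x => (hasDerivAt_tanh_s2 x).continuousAt

theorem concaveOn_tanh_const_mul {Λ : ℝ} (hΛ : 0 ≤ Λ) :
    ConcaveOn ℝ (Ici 0) fun c => tanh (Λ * c) := by
  have hderiv (c : ℝ) :
      HasDerivAt (fun c => tanh (Λ * c)) (Λ * (cosh (Λ * c) ^ 2)⁻¹) c := by
    have h := (hasDerivAt_tanh_s2 (Λ * c)).comp c ((hasDerivAt_id' c).const_mul Λ)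
    rwa [mul_one, mul_comm] at h
  refine AntitoneOn.concaveOn_of_deriv (convex_Ici 0)
    (fun c _ => (hderiv c).continuousAt.continuousWithinAt)
    (fun c _ => (hderiv c).differentiableAt.differentiableWithinAt) ?_
  rw [interior_Ici]
  intro x hx y _ hxy
  rw [(hderiv x).deriv, (hderiv y).deriv]
  have hΛx : 0 ≤ Λ * x := mul_nonneg hΛ hx.le
  have hcosh : cosh (Λ * x) ≤ cosh (Λ * y) := by
    rw [cosh_le_cosh, abs_of_nonneg hΛx, abs_of_nonneg (hΛx.trans (by gcongr))]
    gcongr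
  gcongr

theorem antitoneOn_tanh_const_mul_div {Λ : ℝ} (hΛ : 0 ≤ Λ) :
    AntitoneOn (fun c => tanh (Λ * c) / c) (Ioi 0) := by
  have h := (concaveOn_tanh_const_mul hΛ).antitoneOn_slope_gt (self_mem_Ici (a := (0 : ℝ)))
  intro x (hx : 0 < x) y (hy : 0 < y) hxy
  simpa [slope_def_field] using h ⟨hx.le, hx⟩ ⟨hy.le, hy⟩ hxy

theorem strictMonoOn_div_sub_sq {a b r : ℝ} (ha : 0 < a) (hr : r ^ 2 < b) :
    StrictMonoOn (fun c => a / (b - c ^ 2)) (Icc 0 r) := by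
  intro x hx y hy hxy
  have hy2 : y ^ 2 < b := lt_of_le_of_lt (pow_le_pow_left₀ hy.1 hy.2 2) hr
  dsimp only
  gcongr
  exact hx.1

/-- The division by `x - t` is junk when `x = t`; that case is excluded on both sides because then
the left side reads `ζ = 0` and the right side forces `x ^ 2 = 1`. -/
theorem eq_mul_one_sub_mul_div_sub_iff {ζ x t : ℝ} (hζ : 1 < ζ) (hx : x ∈ Ioo 0 1) :
    ζ = x * (1 - x * t) / (x - t) ↔ t / x = (ζ - 1) / (ζ - x ^ 2) := by
  obtain ⟨hx0, hx1⟩ := hx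
  have hζx : ζ - x ^ 2 ≠ 0 := by nlinarith
  rw [div_eq_div_iff hx0.ne' hζx]
  by_cases hxt : x - t = 0
  · obtain rfl : t = x := by linarith
    simp only [hxt, div_zero]
    constructor
    · intro h; linarith
    · intro h; nlinarith
  · rw [eq_div_iff hxt]
    constructor <;> intro h <;> linarith

noncomputable def slopeGap (Λ ζ c : ℝ) : ℝ := tanh (Λ * c) / c - (ζ - 1) / (ζ - c ^ 2)

section slopeGap

variable {Λ ζ : ℝ}

theorem strictAntiOn_slopeGap (hΛ : 0 ≤ Λ) (hζ : 1 < ζ) :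
    StrictAntiOn (slopeGap Λ ζ) (Ioc 0 1) := by
  intro x hx y hy hxy
  have h_tanh := antitoneOn_tanh_const_mul_div hΛ hx.1 hy.1 hxy.le
  have h_quot := strictMonoOn_div_sub_sq (a := ζ - 1) (b := ζ) (r := 1) (by linarith)
    (by linarith) (Ioc_subset_Icc_self hx) (Ioc_subset_Icc_self hy) hxy
  dsimp only at h_tanh h_quot
  unfold slopeGap
  linarith

theorem continuousOn_slopeGap (hζ : 1 < ζ) : ContinuousOn (slopeGap Λ ζ) (Ioc 0 1) := by
  refine ContinuousOn.sub (ContinuousOn.div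
    (continuous_tanh_s2.comp (continuous_const_mul Λ)).continuousOn (by fun_prop) ?_)
    (ContinuousOn.div (by fun_prop) (by fun_prop) ?_) <;> intro x hx
  · exact hx.1.ne'
  · nlinarith [hx.1, hx.2]

theorem slopeGap_pos_of_tanh_eq {c : ℝ} (hζ : 1 < ζ) (hc : c ∈ Ioo 0 1)
    (hfix : tanh (Λ * c) = c) : 0 < slopeGap Λ ζ c := by
  have h_quot : (ζ - 1) / (ζ - c ^ 2) < 1 := by
    rw [div_lt_one (by nlinarith [hc.1, hc.2])]
    nlinarith [hc.1, hc.2]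
  rw [slopeGap, hfix, div_self hc.1.ne']
  linarith

theorem slopeGap_one_neg (hζ : 1 < ζ) : slopeGap Λ ζ 1 < 0 := by
  rw [slopeGap, mul_one, div_one, one_pow, div_self (sub_ne_zero.2 hζ.ne')]
  linarith [tanh_lt_one Λ]

end slopeGap

theorem transcendental_eq_unique_sol_large_lambda (Λ : ℝ) (hΛ : 1 < Λ)
    (c₀ : ℝ) (hc₀ : c₀ ∈ Set.Ioo (0:ℝ) 1) (hfix : c₀ = Real.tanh (Λ * c₀))
    (ζ : ℝ) (hζ : 1 < ζ) :
    ∃! c : ℝ, c ∈ Set.Ioo c₀ 1 ∧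
      ζ = c * (1 - c * Real.tanh (Λ * c)) / (c - Real.tanh (Λ * c)) := by
  have hsub : Icc c₀ 1 ⊆ Ioc 0 1 := Icc_subset_Ioc hc₀.1 le_rfl
  have hsol (c : ℝ) (hc : c ∈ Ioo c₀ 1) :
      ζ = c * (1 - c * tanh (Λ * c)) / (c - tanh (Λ * c)) ↔ slopeGap Λ ζ c = 0 := by
    rw [eq_mul_one_sub_mul_div_sub_iff hζ ⟨hc₀.1.trans hc.1, hc.2⟩, slopeGap, sub_eq_zero]
  obtain ⟨c, hc, hc_zero⟩ := intermediate_value_Ioo' hc₀.2.le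
    ((continuousOn_slopeGap hζ).mono hsub)
    ⟨slopeGap_one_neg hζ, slopeGap_pos_of_tanh_eq hζ hc₀ hfix.symm⟩
  refine ⟨c, ⟨hc, (hsol c hc).2 hc_zero⟩, fun y ⟨hy, hy_eq⟩ => ?_⟩
  exact (strictAntiOn_slopeGap (by linarith) hζ).injOn (hsub (Ioo_subset_Icc_self hy))
    (hsub (Ioo_subset_Icc_self hc)) (((hsol y hy).1 hy_eq).trans hc_zero.symm)
end

section
/- Let f, g: [m,M] → ℝ be continuous and positive, with at least one of them strictly increasing, and suppose g(y) ≥ f(y) for all y ∈ [m,M]. Let y₀, y: [0,1] → [m,M] be C² solutions of y₀″ = f(y₀) and y″ = g(y) with y₀(0) ≥ y(0) and y₀(1) ≥ y(1). Then y₀(x) ≥ y(x) for all x ∈ [0,1]. -/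
/-!
Put `w = y - y₀`. If `w` were positive somewhere on `[0, 1]`, its maximum would be positive and,
by the boundary conditions, attained at an interior point `c`, where `w''(c) ≤ 0`. But
`y₀(c) < y(c)` and the monotonicity of `f` or `g` give `w''(c) = g(y(c)) - f(y₀(c)) > 0`.
-/

open Set Filter Topology

theorem IsLocalMax.deriv_deriv_nonpos {w : ℝ → ℝ} {c : ℝ} (hmax : IsLocalMax w c)
    (hc : ContinuousAt w c) : deriv (deriv w) c ≤ 0 := by
  by_contra! hpos
  -- `c` would also be a local minimum, so `w` is locally constant around `c`.
  have hmin : IsLocalMin w c := isLocalMin_of_deriv_deriv_pos hpos hmax.deriv_eq_zero hc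
  have hconst : w =ᶠ[𝓝 c] fun _ => w c := by
    filter_upwards [hmax, hmin] with x hx₁ hx₂ using le_antisymm hx₁ hx₂
  have hderiv : deriv w =ᶠ[𝓝 c] fun _ => 0 := by
    simpa only [deriv_const'] using hconst.deriv
  have : deriv (deriv w) c = 0 := by
    simpa only [deriv_const'] using hderiv.deriv_eq
  exact hpos.ne' this

theorem nonpos_of_deriv_deriv_pos {w : ℝ → ℝ} {a b : ℝ} (hw : ContinuousOn w (Icc a b))
    (ha : w a ≤ 0) (hb : w b ≤ 0)
    (hconvex : ∀ x ∈ Ioo a b, 0 < w x → 0 < deriv (deriv w) x) :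
    ∀ x ∈ Icc a b, w x ≤ 0 := by
  by_contra! hpos
  obtain ⟨x₁, hx₁, hwx₁⟩ := hpos
  obtain ⟨c, hc, hcmax⟩ := isCompact_Icc.exists_isMaxOn ⟨x₁, hx₁⟩ hw
  have hwc : 0 < w c := hwx₁.trans_le (hcmax hx₁)
  have hca : a < c := hc.1.lt_of_ne (by rintro rfl; linarith)
  have hcb : c < b := hc.2.lt_of_ne (by rintro rfl; linarith)
  have hnhds : Icc a b ∈ 𝓝 c := Icc_mem_nhds hca hcb
  have := (hcmax.isLocalMax hnhds).deriv_deriv_nonpos (hw.continuousAt hnhds)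
  exact (hconvex c ⟨hca, hcb⟩ hwc).not_ge this

theorem apply_lt_apply_of_strictMonoOn_or {α β : Type*} [Preorder α] [Preorder β]
    {s : Set α} {f g : α → β} (hmono : StrictMonoOn f s ∨ StrictMonoOn g s)
    (hfg : ∀ y ∈ s, f y ≤ g y) {a b : α} (ha : a ∈ s) (hb : b ∈ s) (hab : a < b) :
    f a < g b := by
  rcases hmono with hf | hg
  · exact (hf ha hb hab).trans_le (hfg b hb)
  · exact (hfg a ha).trans_lt (hg ha hb hab)

theorem deriv_deriv_sub {𝕜 F : Type*} [NontriviallyNormedField 𝕜] [NormedAddCommGroup F]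
    [NormedSpace 𝕜 F] {u v : 𝕜 → F} (hu : ContDiff 𝕜 2 u) (hv : ContDiff 𝕜 2 v) :
    deriv (deriv (u - v)) = deriv (deriv u) - deriv (deriv v) := by
  have hsub : deriv (u - v) = deriv u - deriv v := by
    funext x
    exact deriv_sub (hu.differentiable two_ne_zero x) (hv.differentiable two_ne_zero x)
  funext x
  rw [hsub]
  exact deriv_sub (hu.differentiable_deriv_two x) (hv.differentiable_deriv_two x)

theorem comparison_principle_envelopes_general (m M : ℝ)
    (f g : ℝ → ℝ)
    (hmono : StrictMonoOn f (Set.Icc m M) ∨ StrictMonoOn g (Set.Icc m M))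
    (hfg : ∀ y ∈ Set.Icc m M, f y ≤ g y)
    (y₀ y : ℝ → ℝ)
    (hy₀smooth : ContDiff ℝ 2 y₀) (hysmooth : ContDiff ℝ 2 y)
    (hy₀mem : ∀ x ∈ Set.Icc (0:ℝ) 1, y₀ x ∈ Set.Icc m M)
    (hymem : ∀ x ∈ Set.Icc (0:ℝ) 1, y x ∈ Set.Icc m M)
    (hy₀ode : ∀ x ∈ Set.Icc (0:ℝ) 1, deriv (deriv y₀) x = f (y₀ x))
    (hyode : ∀ x ∈ Set.Icc (0:ℝ) 1, deriv (deriv y) x = g (y x))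
    (hb0 : y 0 ≤ y₀ 0) (hb1 : y 1 ≤ y₀ 1) :
    ∀ x ∈ Set.Icc (0:ℝ) 1, y x ≤ y₀ x := by
  have hw : ∀ x ∈ Icc (0:ℝ) 1, (y - y₀) x ≤ 0 := by
    refine nonpos_of_deriv_deriv_pos (hysmooth.continuous.sub hy₀smooth.continuous).continuousOn
      (sub_nonpos.2 hb0) (sub_nonpos.2 hb1) fun x hx hwx => ?_
    have hx' : x ∈ Icc (0:ℝ) 1 := Ioo_subset_Icc_self hx
    rw [deriv_deriv_sub hysmooth hy₀smooth, Pi.sub_apply, hyode x hx', hy₀ode x hx', sub_pos]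
    exact apply_lt_apply_of_strictMonoOn_or hmono hfg (hy₀mem x hx') (hymem x hx')
      (sub_pos.1 hwx)
  exact fun x hx => sub_nonpos.1 (hw x hx)

theorem comparison_principle_envelopes (m M : ℝ) (hmM : m ≤ M)
    (f g : ℝ → ℝ)
    (hfc : ContinuousOn f (Set.Icc m M)) (hgc : ContinuousOn g (Set.Icc m M))
    (hfpos : ∀ y ∈ Set.Icc m M, 0 < f y) (hgpos : ∀ y ∈ Set.Icc m M, 0 < g y)
    (hmono : StrictMonoOn f (Set.Icc m M) ∨ StrictMonoOn g (Set.Icc m M))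
    (hfg : ∀ y ∈ Set.Icc m M, f y ≤ g y)
    (y₀ y : ℝ → ℝ)
    (hy₀smooth : ContDiff ℝ 2 y₀) (hysmooth : ContDiff ℝ 2 y)
    (hy₀mem : ∀ x ∈ Set.Icc (0:ℝ) 1, y₀ x ∈ Set.Icc m M)
    (hymem : ∀ x ∈ Set.Icc (0:ℝ) 1, y x ∈ Set.Icc m M)
    (hy₀ode : ∀ x ∈ Set.Icc (0:ℝ) 1, deriv (deriv y₀) x = f (y₀ x))
    (hyode : ∀ x ∈ Set.Icc (0:ℝ) 1, deriv (deriv y) x = g (y x))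
    (hb0 : y 0 ≤ y₀ 0) (hb1 : y 1 ≤ y₀ 1) :
    ∀ x ∈ Set.Icc (0:ℝ) 1, y x ≤ y₀ x :=
  comparison_principle_envelopes_general m M f g hmono hfg y₀ y hy₀smooth hysmooth hy₀mem hymem
    hy₀ode hyode hb0 hb1
end

section
/- For t ∈ (0,1), the quantity q̃₊(t) := √((1−t³)(5+t³)/(5(1−t⁴))) satisfies √(0.9) ≤ q̃₊(t) ≤ 1. -/
theorem q_plus_bounds (t : ℝ) (ht : t ∈ Set.Ioo (0:ℝ) 1) :
    Real.sqrt 0.9 ≤ Real.sqrt ((1 - t ^ 3) * (5 + t ^ 3) / (5 * (1 - t ^ 4))) ∧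
    Real.sqrt ((1 - t ^ 3) * (5 + t ^ 3) / (5 * (1 - t ^ 4))) ≤ 1 := by
  obtain ⟨ht0, ht1⟩ := ht
  have hden : (0:ℝ) < 5 * (1 - t ^ 4) := by nlinarith [pow_lt_one₀ (le_of_lt ht0) ht1 (by norm_num : (4:ℕ) ≠ 0)]
  have hlow : (0.9:ℝ) ≤ (1 - t ^ 3) * (5 + t ^ 3) / (5 * (1 - t ^ 4)) := by
    rw [le_div_iff₀ hden]
    nlinarith [mul_nonneg (mul_nonneg (pow_nonneg (by linarith : (0:ℝ) ≤ 1 - t) 3)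
      (pow_nonneg ht0.le 3)) ht0.le,
      pow_nonneg (by linarith : (0:ℝ) ≤ 1 - t) 3, pow_nonneg ht0.le 2,
      mul_nonneg (pow_nonneg (by linarith : (0:ℝ) ≤ 1 - t) 3) (pow_nonneg ht0.le 2),
      mul_nonneg (pow_nonneg (by linarith : (0:ℝ) ≤ 1 - t) 3) ht0.le]
  have hup : (1 - t ^ 3) * (5 + t ^ 3) / (5 * (1 - t ^ 4)) ≤ 1 := by
    rw [div_le_one hden]
    nlinarith [mul_nonneg (mul_nonneg (pow_nonneg ht0.le 3) (by linarith : (0:ℝ) ≤ 1 - t))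
      (by nlinarith : (0:ℝ) ≤ 4 - t - t ^ 2)]
  constructor
  · exact Real.sqrt_le_sqrt hlow
  · exact Real.sqrt_le_one.mpr hup
end

section
/- For t ∈ (0,1), the function φ(t) := (1 − t·[tanh(tanh⁻¹(t^{3/2}) + 1.5√2·t^{3/2})]^{−2/3})/(1 − t) satisfies φ(t) > 0.5 for all t ∈ (0,1). -/
/-- The inverse hyperbolic tangent, `tanh⁻¹ x = (1/2) log((1+x)/(1-x))`. -/
noncomputable def arctanh (x : ℝ) : ℝ := Real.log ((1 + x) / (1 - x)) / 2

lemma tanh_formula (x : ℝ) :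
    Real.tanh x = (Real.exp (2*x) - 1) / (Real.exp (2*x) + 1) := by
  have h2 : Real.exp (2*x) = Real.exp x * Real.exp x := by
    rw [two_mul, Real.exp_add]
  have hx : Real.exp x ≠ 0 := (Real.exp_pos x).ne'
  have hp : (0:ℝ) < Real.exp x * Real.exp x + 1 := by positivity
  rw [Real.tanh_eq_sinh_div_cosh, Real.sinh_eq, Real.cosh_eq, Real.exp_neg, h2]
  have hne : Real.exp x + (Real.exp x)⁻¹ ≠ 0 := by positivity
  field_simp

lemma tanh_gt_of_gt_arctanh (w X : ℝ) (hw0 : 0 < w) (hw1 : w < 1)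
    (hX : arctanh w < X) : w < Real.tanh X := by
  have hfrac : (0:ℝ) < (1 + w) / (1 - w) := by
    apply div_pos <;> linarith
  have hE : (1 + w) / (1 - w) < Real.exp (2*X) := by
    have hlog : Real.log ((1 + w) / (1 - w)) < 2*X := by
      unfold arctanh at hX; linarith
    calc (1 + w) / (1 - w) = Real.exp (Real.log ((1 + w) / (1 - w))) :=
          (Real.exp_log hfrac).symm
      _ < Real.exp (2*X) := Real.exp_lt_exp.2 hlog
  have hE1 : (0:ℝ) < Real.exp (2*X) + 1 := by positivity
  rw [tanh_formula, lt_div_iff₀ hE1]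
  have h1 : (1 + w) < Real.exp (2*X) * (1 - w) := by
    rw [div_lt_iff₀ (by linarith)] at hE
    linarith
  nlinarith

/-- Core algebraic inequality. -/
lemma key_core (y p z : ℝ) (hy : 0 < y) (hp1 : 1 < p) (hpz : p ≤ z)
    (hz : z^2 = 2) (hz0 : 1 < z) :
    (p^2+p+1)*(1+y) < (3*z/2)*(1+y+y^2)*(p+1) := by
  nlinarith [mul_nonneg (sub_nonneg.2 hpz) (by nlinarith : (1+z)*(p+z) - 2 ≥ 0),
    mul_pos (by linarith : (0:ℝ) < 1+y) (by linarith : (0:ℝ) < p+1),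
    mul_nonneg (sq_nonneg y) (by linarith : (0:ℝ) ≤ p+1), sq_nonneg (z-1)]

lemma key (q p z : ℝ) (hq : 0 < q) (hp1 : 1 < p) (hpz : p ≤ z)
    (hz : z^2 = 2) (hz0 : 1 < z) (hp : p^2 * (1 + q^2) = 2) :
    p^3 - 1 < (3*z/2) * (1 - (q*p)^3) := by
  set y := q*p with hy
  have hy0 : 0 < y := mul_pos hq (by linarith)
  have hK : p^2 - 1 = 1 - y^2 := by
    have : y^2 = q^2 * p^2 := by rw [hy]; ring
    nlinarith [hp]
  have hy1 : y < 1 := by nlinarith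
  have hcore := key_core y p z hy0 hp1 hpz hz hz0
  have hpos : (0:ℝ) < (p+1)*(1+y) := by
    apply mul_pos <;> linarith
  have hfac : (p^3 - 1) * ((p+1)*(1+y)) < ((3*z/2) * (1 - y^3)) * ((p+1)*(1+y)) := by
    have e1 : (p^3-1)*((p+1)*(1+y)) = (1-y^2)*((p^2+p+1)*(1+y)) := by
      linear_combination ((p^2+p+1)*(1+y)) * hK
    have e2 : ((3*z/2)*(1-y^3))*((p+1)*(1+y)) = (1-y^2)*((3*z/2)*(1+y+y^2)*(p+1)) := by
      ring
    rw [e1, e2]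
    exact mul_lt_mul_of_pos_left hcore (by nlinarith : (0:ℝ) < 1 - y^2)
  exact lt_of_mul_lt_mul_right hfac hpos.le

set_option maxHeartbeats 1000000 in
theorem boundary_layer_variation_ratio (t : ℝ) (ht : t ∈ Set.Ioo (0:ℝ) 1) :
    (1 - t * (Real.tanh (arctanh (t ^ ((3:ℝ)/2)) + 1.5 * Real.sqrt 2 * t ^ ((3:ℝ)/2)))
        ^ (-(2:ℝ)/3)) / (1 - t) > 0.5 := by
  obtain ⟨ht0, ht1⟩ := ht
  set z := Real.sqrt 2 with hzdef
  have hz : z^2 = 2 := Real.sq_sqrt (by norm_num)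
  have hz0 : 1 < z := by
    rw [hzdef, show (1:ℝ) = Real.sqrt 1 by simp]
    exact Real.sqrt_lt_sqrt (by norm_num) (by norm_num)
  set q := Real.sqrt t with hqdef
  have hq0 : 0 < q := Real.sqrt_pos.2 ht0
  have hq2 : q^2 = t := Real.sq_sqrt ht0.le
  have hq1 : q < 1 := by
    rw [hqdef, show (1:ℝ) = Real.sqrt 1 by simp]
    exact Real.sqrt_lt_sqrt ht0.le ht1
  set p := Real.sqrt (2/(1+t)) with hpdef
  have hfp : (0:ℝ) < 2/(1+t) := by positivity
  have hp2 : p^2 = 2/(1+t) := Real.sq_sqrt hfp.le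
  have hp1 : 1 < p := by
    have h : (1:ℝ) < 2/(1+t) := by rw [lt_div_iff₀ (by linarith)]; linarith
    calc (1:ℝ) = Real.sqrt 1 := by simp
      _ < p := Real.sqrt_lt_sqrt (by norm_num) h
  have hpz : p ≤ z := by
    rw [hpdef, hzdef]
    exact Real.sqrt_le_sqrt (by rw [div_le_iff₀ (by linarith)]; nlinarith)
  have hpq : p^2 * (1 + q^2) = 2 := by
    rw [hp2, hq2]; field_simp
  -- s and s'
  set u : ℝ := 2*t/(1+t) with hudef
  have hu0 : 0 < u := by positivity
  have hu1 : u < 1 := by rw [hudef, div_lt_one (by linarith)]; linarith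
  have hut : t < u := by rw [hudef, lt_div_iff₀ (by linarith)]; nlinarith
  set s : ℝ := t ^ ((3:ℝ)/2) with hsdef
  set s' : ℝ := u ^ ((3:ℝ)/2) with hs'def
  have hs0 : 0 < s := Real.rpow_pos_of_pos ht0 _
  have hs1 : s < 1 := Real.rpow_lt_one ht0.le ht1 (by norm_num)
  have hs'0 : 0 < s' := Real.rpow_pos_of_pos hu0 _
  have hs'1 : s' < 1 := Real.rpow_lt_one hu0.le hu1 (by norm_num)
  -- s = q^3, s' = (q*p)^3
  have hsq : s = q^3 := by
    rw [hsdef, hqdef, Real.sqrt_eq_rpow,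
      ← Real.rpow_natCast (t ^ ((1:ℝ)/2)) 3, ← Real.rpow_mul ht0.le]
    norm_num
  have huqp : u = t * (2/(1+t)) := by rw [hudef]; ring
  have hqp : Real.sqrt u = q * p := by
    rw [huqp, Real.sqrt_mul ht0.le, hqdef, hpdef]
  have hs'qp : s' = (q*p)^3 := by
    rw [hs'def, ← hqp, Real.sqrt_eq_rpow,
      ← Real.rpow_natCast (u ^ ((1:ℝ)/2)) 3, ← Real.rpow_mul hu0.le]
    norm_num
  -- key inequality : s' - s < (3z/2) * s * (1 - s')
  have hkey : s' - s < (3*z/2) * s * (1 - s') := by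
    have h := key q p z hq0 hp1 hpz hz hz0 hpq
    calc s' - s = s * (p^3 - 1) := by rw [hsq, hs'qp]; ring
      _ < s * ((3*z/2) * (1 - (q*p)^3)) := mul_lt_mul_of_pos_left h hs0
      _ = (3*z/2) * s * (1 - s') := by rw [hs'qp]; ring
  -- arctanh s' < arctanh s + 1.5 z s
  have harc : arctanh s' < arctanh s + 1.5 * z * s := by
    unfold arctanh
    have h1s : (0:ℝ) < 1 - s := by linarith
    have h1s' : (0:ℝ) < 1 - s' := by linarith
    have hA : (0:ℝ) < (1+s')/(1-s') := by positivity
    have hB : (0:ℝ) < (1+s)/(1-s) := by positivity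
    have hR : (0:ℝ) < ((1+s')/(1-s')) / ((1+s)/(1-s)) := by positivity
    have hlog : Real.log ((1+s')/(1-s')) - Real.log ((1+s)/(1-s))
        = Real.log (((1+s')/(1-s')) / ((1+s)/(1-s))) :=
      (Real.log_div hA.ne' hB.ne').symm
    have hle := Real.log_le_sub_one_of_pos hR
    have hRval : ((1+s')/(1-s')) / ((1+s)/(1-s)) - 1 = 2*(s'-s) / ((1-s')*(1+s)) := by
      field_simp
      ring
    have hbound : 2*(s'-s) / ((1-s')*(1+s)) < 3 * z * s := by
      rw [div_lt_iff₀ (by positivity)]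
      have h1 : (3*z/2) * s * (1-s') * 1 ≤ (3*z/2) * s * (1-s') * (1+s) := by
        apply mul_le_mul_of_nonneg_left (by linarith)
        positivity
      nlinarith [hkey]
    linarith [hlog, hle, hRval, hbound]
  -- tanh bound
  set X := arctanh s + 1.5 * z * s with hXdef
  have htanh : s' < Real.tanh X := tanh_gt_of_gt_arctanh s' X hs'0 hs'1 harc
  set H := Real.tanh X with hHdef
  -- rpow comparison
  have hrpow : H ^ (-(2:ℝ)/3) < s' ^ (-(2:ℝ)/3) :=
    Real.rpow_lt_rpow_of_neg hs'0 htanh (by norm_num)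
  have hs'r : s' ^ (-(2:ℝ)/3) = u⁻¹ := by
    rw [hs'def, ← Real.rpow_mul hu0.le,
      show ((3:ℝ)/2) * (-(2:ℝ)/3) = -1 by norm_num, Real.rpow_neg_one]
  have huval : t * u⁻¹ = (1+t)/2 := by
    rw [hudef]
    field_simp
  have hfin : t * H ^ (-(2:ℝ)/3) < (1+t)/2 := by
    calc t * H ^ (-(2:ℝ)/3) < t * s' ^ (-(2:ℝ)/3) :=
          mul_lt_mul_of_pos_left hrpow ht0
      _ = (1+t)/2 := by rw [hs'r, huval]
  rw [gt_iff_lt, show (0.5:ℝ) = 1/2 by norm_num, lt_div_iff₀ (by linarith : (0:ℝ) < 1 - t)]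
  linarith
end
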